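/- arXiv:2006.12625 — 2 statements merged into one kernel-verified Lean document; each statement's English description precedes it below -/
import Mathlib

section
/- Let φ and Φ be the standard normal density and CDF. Then as v ↑ 1, the density-quantile function satisfies φ(Φ^{-1}(v)) / [(1−v)·√(2 log(1/(1−v)))] → 1. -/
open MeasureTheory ProbabilityTheory Real Filter

/-- standard normal density -/
noncomputable def stdPDF (x : ℝ) : ℝ := (Real.sqrt (2 * Real.pi))⁻¹ * Real.exp (-(x ^ 2) / 2)

/-- standard normal CDF -/
noncomputable def stdCDF (x : ℝ) : ℝ := ∫ t in Set.Iic x, stdPDF t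

/-!
With `Q = 1 - Φ` the upper tail, Mills' inequalities `(1 - x⁻²) φ(x) ≤ x Q(x) ≤ φ(x)` give
`φ(x) / (x Q(x)) → 1` as `x → ∞`. Taking logarithms, `2 log (1 / Q(x)) = x² + O(log x)`, so
`√(2 log (1 / Q(x))) ~ x` and therefore `φ(x) / (Q(x) √(2 log (1 / Q(x)))) → 1`. Substituting
`x = Φ⁻¹(v)`, which tends to `∞` as `v ↑ 1` and satisfies `Q(x) = 1 - v`, gives the theorem.
-/

open Set Topology

lemma stdPDF_eq_gaussianPDFReal : stdPDF = gaussianPDFReal 0 1 := by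
  ext x
  simp only [stdPDF, gaussianPDFReal]
  norm_num

lemma stdPDF_pos (x : ℝ) : 0 < stdPDF x := by
  rw [stdPDF_eq_gaussianPDFReal]
  exact gaussianPDFReal_pos _ _ _ one_ne_zero

lemma integrable_stdPDF : Integrable stdPDF := by
  rw [stdPDF_eq_gaussianPDFReal]
  exact integrable_gaussianPDFReal _ _

lemma integral_stdPDF : ∫ x, stdPDF x = 1 := by
  rw [stdPDF_eq_gaussianPDFReal]
  exact integral_gaussianPDFReal_eq_one _ one_ne_zero

lemma hasDerivAt_stdPDF (x : ℝ) : HasDerivAt stdPDF (-x * stdPDF x) x := by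
  have h : HasDerivAt (fun x : ℝ => -(x ^ 2) / 2) (-x) x := by
    simpa using ((hasDerivAt_pow 2 x).fun_neg.div_const 2).congr_deriv (by ring)
  exact (h.exp.const_mul (√(2 * π))⁻¹).congr_deriv (by unfold stdPDF; ring)

lemma tendsto_stdPDF_atTop : Tendsto stdPDF atTop (𝓝 0) := by
  have h : Tendsto (fun x : ℝ => -(x ^ 2) / 2) atTop atBot :=
    (tendsto_neg_atTop_atBot.comp (tendsto_pow_atTop two_ne_zero)).atBot_div_const two_pos
  rw [← mul_zero (√(2 * π))⁻¹]
  exact (tendsto_exp_atBot.comp h).const_mul _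

lemma monotone_stdCDF : Monotone stdCDF := fun _ _ hab =>
  setIntegral_mono_set integrable_stdPDF.integrableOn
    (ae_of_all _ fun x => (stdPDF_pos x).le) (Iic_subset_Iic.2 hab).eventuallyLE

noncomputable def stdTail (x : ℝ) : ℝ := ∫ t in Ioi x, stdPDF t

lemma stdTail_eq_one_sub_stdCDF (x : ℝ) : stdTail x = 1 - stdCDF x := by
  have h := integral_add_compl (measurableSet_Iic (a := x)) integrable_stdPDF
  rw [compl_Iic, integral_stdPDF] at h
  rw [stdTail, stdCDF]
  linarith

lemma stdTail_pos (x : ℝ) : 0 < stdTail x := by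
  rw [stdTail, setIntegral_pos_iff_support_of_nonneg_ae
    (ae_of_all _ fun t => (stdPDF_pos t).le) integrable_stdPDF.integrableOn,
    Function.support_eq_univ fun t => (stdPDF_pos t).ne', univ_inter, Real.volume_Ioi]
  exact ENNReal.zero_lt_top

lemma stdCDF_lt_one (x : ℝ) : stdCDF x < 1 := by
  linarith [stdTail_pos x, stdTail_eq_one_sub_stdCDF x]

section TailComparison

variable {f g g' : ℝ → ℝ} {a l : ℝ}

lemma le_integral_Ioi_of_hasDerivAt_le (hderiv : ∀ x ∈ Ici a, HasDerivAt g (g' x) x)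
    (hg' : ∀ x ∈ Ioi a, 0 ≤ g' x) (hg : Tendsto g atTop (𝓝 l)) (hf : IntegrableOn f (Ioi a))
    (hle : ∀ x ∈ Ioi a, g' x ≤ f x) : l - g a ≤ ∫ x in Ioi a, f x := by
  rw [← integral_Ioi_of_hasDerivAt_of_nonneg' hderiv hg' hg]
  exact setIntegral_mono_on (integrableOn_Ioi_deriv_of_nonneg' hderiv hg' hg) hf
    measurableSet_Ioi hle

lemma integral_Ioi_le_of_le_hasDerivAt (hderiv : ∀ x ∈ Ici a, HasDerivAt g (g' x) x)
    (hg' : ∀ x ∈ Ioi a, 0 ≤ g' x) (hg : Tendsto g atTop (𝓝 l)) (hf : IntegrableOn f (Ioi a))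
    (hle : ∀ x ∈ Ioi a, f x ≤ g' x) : ∫ x in Ioi a, f x ≤ l - g a := by
  rw [← integral_Ioi_of_hasDerivAt_of_nonneg' hderiv hg' hg]
  exact setIntegral_mono_on hf (integrableOn_Ioi_deriv_of_nonneg' hderiv hg' hg)
    measurableSet_Ioi hle

end TailComparison

/-- Mills' ratio, upper bound: on `(x, ∞)` the density is dominated by `t φ(t) / x = -(φ / x)'`. -/
lemma mul_stdTail_le_stdPDF {x : ℝ} (hx : 0 < x) : x * stdTail x ≤ stdPDF x := by
  have hderiv (t : ℝ) : HasDerivAt (fun t => -(stdPDF t / x)) (t * stdPDF t / x) t := by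
    simpa using ((hasDerivAt_stdPDF t).div_const x).fun_neg.congr_deriv (by ring)
  have h := integral_Ioi_le_of_le_hasDerivAt (fun t _ => hderiv t)
    (fun t ht => div_nonneg (mul_nonneg (hx.le.trans ht.le) (stdPDF_pos t).le) hx.le)
    (by simpa using (tendsto_stdPDF_atTop.div_const x).neg) integrable_stdPDF.integrableOn
    (fun t ht => by
      rw [le_div_iff₀ hx, mul_comm (stdPDF t)]
      exact mul_le_mul_of_nonneg_right ht.le (stdPDF_pos t).le)
  rw [zero_sub, neg_neg] at h
  rw [stdTail, ← le_div_iff₀' hx]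
  exact h

/-- Mills' ratio, lower bound: `-(1/t - 1/t³) φ(t)` has derivative `(1 - 3/t⁴) φ(t) ≤ φ(t)`. -/
lemma one_sub_inv_sq_mul_stdPDF_le {x : ℝ} (hx : 2 ≤ x) :
    (1 - (x ^ 2)⁻¹) * stdPDF x ≤ x * stdTail x := by
  have hx0 : 0 < x := by linarith
  have hderiv : ∀ t ∈ Ici x, HasDerivAt (fun t => -((t⁻¹ - (t ^ 3)⁻¹) * stdPDF t))
      ((1 - 3 * (t ^ 4)⁻¹) * stdPDF t) t := by
    intro t ht
    have ht0 : t ≠ 0 := (hx0.trans_le ht).ne'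
    have h := (((hasDerivAt_inv ht0).sub ((hasDerivAt_pow 3 t).inv (pow_ne_zero 3 ht0))).mul
      (hasDerivAt_stdPDF t)).fun_neg
    refine h.congr_deriv ?_
    simp only [Pi.sub_apply, Pi.inv_apply]
    field_simp
    ring
  have hg' : ∀ t ∈ Ioi x, 0 ≤ (1 - 3 * (t ^ 4)⁻¹) * stdPDF t := by
    intro t ht
    have h16 : (16 : ℝ) ≤ t ^ 4 := by
      have : (2 : ℝ) ^ 4 ≤ t ^ 4 := pow_le_pow_left₀ zero_le_two (hx.trans ht.le) 4
      norm_num at this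
      exact this
    have : 3 * (t ^ 4)⁻¹ ≤ 1 := by
      rw [← div_eq_mul_inv, div_le_one (by positivity)]
      linarith
    exact mul_nonneg (by linarith) (stdPDF_pos t).le
  have hg : Tendsto (fun t => -((t⁻¹ - (t ^ 3)⁻¹) * stdPDF t)) atTop (𝓝 0) := by
    have h3 : Tendsto (fun t : ℝ => (t ^ 3)⁻¹) atTop (𝓝 0) :=
      tendsto_inv_atTop_zero.comp (tendsto_pow_atTop three_ne_zero)
    simpa using ((tendsto_inv_atTop_zero.sub h3).mul tendsto_stdPDF_atTop).neg
  have h := le_integral_Ioi_of_hasDerivAt_le hderiv hg' hg integrable_stdPDF.integrableOn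
    (fun t _ => mul_le_of_le_one_left (stdPDF_pos t).le (by simp; positivity))
  rw [zero_sub, neg_neg] at h
  calc (1 - (x ^ 2)⁻¹) * stdPDF x = x * ((x⁻¹ - (x ^ 3)⁻¹) * stdPDF x) := by
        field_simp
    _ ≤ x * stdTail x := mul_le_mul_of_nonneg_left h hx0.le

lemma tendsto_stdPDF_div_mul_stdTail :
    Tendsto (fun x => stdPDF x / (x * stdTail x)) atTop (𝓝 1) := by
  have hupper : Tendsto (fun x : ℝ => (1 - (x ^ 2)⁻¹)⁻¹) atTop (𝓝 1) := by
    have h := tendsto_inv_atTop_zero.comp (tendsto_pow_atTop (α := ℝ) two_ne_zero)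
    simpa using (tendsto_const_nhds.sub h).inv₀ (by norm_num : (1 : ℝ) - 0 ≠ 0)
  refine tendsto_of_tendsto_of_tendsto_of_le_of_le' tendsto_const_nhds hupper ?_ ?_
  all_goals filter_upwards [eventually_ge_atTop (2 : ℝ)] with x hx
  all_goals have hxQ : 0 < x * stdTail x := mul_pos (by linarith) (stdTail_pos x)
  · exact (one_le_div hxQ).2 (mul_stdTail_le_stdPDF (by linarith))
  · have hc : 0 < 1 - (x ^ 2)⁻¹ := by
      rw [sub_pos, inv_lt_one₀ (by positivity)]
      nlinarith
    rw [div_le_iff₀ hxQ, ← div_le_iff₀' (inv_pos.2 hc), div_inv_eq_mul, mul_comm]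
    exact one_sub_inv_sq_mul_stdPDF_le hx

lemma tendsto_sq_add_two_log_add_div_sq {g : ℝ → ℝ} {c : ℝ} (hg : Tendsto g atTop (𝓝 c)) :
    Tendsto (fun x => (x ^ 2 + 2 * log x + g x) / x ^ 2) atTop (𝓝 1) := by
  have hinv : Tendsto (fun x : ℝ => (x ^ 2)⁻¹) atTop (𝓝 0) :=
    tendsto_inv_atTop_zero.comp (tendsto_pow_atTop two_ne_zero)
  have hlog : Tendsto (fun x => log x / x * x⁻¹) atTop (𝓝 0) := by
    simpa using isLittleO_log_id_atTop.tendsto_div_nhds_zero.mul tendsto_inv_atTop_zero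
  have h := (tendsto_const_nhds (x := (1 : ℝ))).add ((hlog.const_mul 2).add (hg.mul hinv))
  simp only [mul_zero, add_zero] at h
  refine h.congr' ?_
  filter_upwards [eventually_gt_atTop (0 : ℝ)] with x hx
  field_simp
  ring

lemma two_log_inv_stdTail_eq {x : ℝ} (hx : 0 < x) :
    2 * log (1 / stdTail x) =
      x ^ 2 + 2 * log x + (log (2 * π) + 2 * log (stdPDF x / (x * stdTail x))) := by
  have hQ := stdTail_pos x
  rw [log_div (stdPDF_pos x).ne' (mul_pos hx hQ).ne', log_mul hx.ne' hQ.ne', one_div, log_inv,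
    stdPDF, log_mul (by positivity) (exp_pos _).ne', log_inv, log_exp, log_sqrt (by positivity)]
  ring

lemma tendsto_two_log_inv_stdTail_div_sq :
    Tendsto (fun x => 2 * log (1 / stdTail x) / x ^ 2) atTop (𝓝 1) := by
  have hlog := (continuousAt_log one_ne_zero).tendsto.comp tendsto_stdPDF_div_mul_stdTail
  rw [log_one] at hlog
  refine (tendsto_sq_add_two_log_add_div_sq ((hlog.const_mul 2).const_add (log (2 * π)))).congr' ?_
  filter_upwards [eventually_gt_atTop (0 : ℝ)] with x hx
  rw [two_log_inv_stdTail_eq hx]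
  rfl

lemma tendsto_div_sqrt_two_log_inv_stdTail :
    Tendsto (fun x => x / √(2 * log (1 / stdTail x))) atTop (𝓝 1) := by
  have h := ((continuous_sqrt.tendsto 1).comp tendsto_two_log_inv_stdTail_div_sq).inv₀
    (by norm_num)
  rw [sqrt_one, inv_one] at h
  refine h.congr' ?_
  filter_upwards [eventually_gt_atTop (0 : ℝ)] with x hx
  rw [Function.comp_apply, sqrt_div' _ (sq_nonneg x), sqrt_sq hx.le, inv_div]

lemma tendsto_stdPDF_div_stdTail_mul_sqrt :
    Tendsto (fun x => stdPDF x / (stdTail x * √(2 * log (1 / stdTail x)))) atTop (𝓝 1) := by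
  have h := tendsto_stdPDF_div_mul_stdTail.mul tendsto_div_sqrt_two_log_inv_stdTail
  rw [mul_one] at h
  refine h.congr' ?_
  filter_upwards [eventually_gt_atTop (0 : ℝ)] with x hx
  rw [div_mul_div_comm, mul_comm (stdPDF x), mul_assoc, mul_div_mul_left _ _ hx.ne']

lemma tendsto_atTop_of_monotone_comp_eq {F q : ℝ → ℝ} (hF : Monotone F) (hF1 : ∀ x, F x < 1)
    (hq : ∀ᶠ v in 𝓝[<] 1, F (q v) = v) : Tendsto q (𝓝[<] 1) atTop := by
  refine tendsto_atTop.2 fun b => ?_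
  filter_upwards [hq, Ioo_mem_nhdsLT (hF1 b)] with v hv hbv
  by_contra! hlt
  have hle : v ≤ F b := hv ▸ hF hlt.le
  exact hle.not_gt hbv.1

/-- the density-quantile function satisfies
φ(Φ⁻¹(v)) / [(1−v)√(2 log(1/(1−v)))] → 1 as v ↑ 1. -/
theorem stmt_5 (Φinv : ℝ → ℝ) (hΦinv : ∀ v ∈ Set.Ioo (0:ℝ) 1, stdCDF (Φinv v) = v) :
    Tendsto (fun v : ℝ =>
        stdPDF (Φinv v) / ((1 - v) * Real.sqrt (2 * Real.log (1 / (1 - v)))))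
      (nhdsWithin 1 (Set.Iio 1)) (nhds 1) := by
  have hright : ∀ᶠ v in 𝓝[<] (1 : ℝ), stdCDF (Φinv v) = v :=
    eventually_of_mem (Ioo_mem_nhdsLT one_pos) hΦinv
  have htail : ∀ᶠ v in 𝓝[<] (1 : ℝ), stdTail (Φinv v) = 1 - v :=
    hright.mono fun v hv => by rw [stdTail_eq_one_sub_stdCDF, hv]
  refine (tendsto_stdPDF_div_stdTail_mul_sqrt.comp
    (tendsto_atTop_of_monotone_comp_eq monotone_stdCDF stdCDF_lt_one hright)).congr' ?_
  filter_upwards [htail] with v hv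
  rw [Function.comp_apply, hv]
end

section
/- Let ρ ∈ (0,1), a = √(ρ/(1−ρ)), and define R_n(ε) = E[1{1 − Φ(aZ) ≤ ε} Φ(aZ)^n] / E[Φ(aZ)^n] with Z standard normal. Set ε* = (1−ρ)/(nρ). Then for every c > 0: (i) for all sufficiently large n, R_n(ε* − c) = 0, and (ii) R_n(ε* + c) → 1 as n → ∞. -/
/-!
`R_n(ε)` is the share of the mass of `Φ(aZ)ⁿ` carried by the event `{1 - Φ(aZ) ≤ ε}`, and
`ε* → 0`. Below `ε* - c` the threshold is eventually negative, so the event is empty. Above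
`ε* + c` the threshold is at least `c`: on the complementary event `Φ(aZ)ⁿ ≤ (1 - c)ⁿ`, while
`Φ(aZ)` has essential supremum `1` (as `a > 0`), so the total mass is at least
`(1 - c/2)ⁿ · P(Φ(aZ) ≥ 1 - c/2)` with a positive probability. The neglected share is therefore
`O(((1 - c)/(1 - c/2))ⁿ) → 0`.
-/

open MeasureTheory ProbabilityTheory Real Filter
open scoped NNReal ENNReal Topology

lemma stdCDF_eq_cdf_gaussianReal : stdCDF = cdf (gaussianReal 0 1) := by
  funext x
  have hpdf : stdPDF = gaussianPDFReal 0 1 := by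
    funext t
    simp [stdPDF, gaussianPDFReal]
  rw [cdf_eq_real, measureReal_def, gaussianReal_apply_eq_integral 0 one_ne_zero,
    ENNReal.toReal_ofReal (setIntegral_nonneg measurableSet_Iic fun t _ ↦
      gaussianPDFReal_nonneg 0 1 t), stdCDF, hpdf]

lemma gaussianReal_Ici_pos (m : ℝ) {v : ℝ≥0} (hv : v ≠ 0) (x : ℝ) :
    0 < gaussianReal m v (Set.Ici x) := by
  refine pos_iff_ne_zero.2 fun h ↦ ?_
  have := gaussianReal_absolutelyContinuous' m hv h
  simp at this

section PowerWeighted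

variable {Ω : Type*} [MeasurableSpace Ω] {μ : Measure Ω} {X : Ω → ℝ}

/-- `R_n(ε)` for a `[0, 1]`-valued random variable `X` in place of `Φ(aZ)`. -/
noncomputable def powerWeightedCDF (μ : Measure Ω) (X : Ω → ℝ) (n : ℕ) (ε : ℝ) : ℝ :=
  (∫ ω, (if 1 - X ω ≤ ε then X ω ^ n else 0) ∂μ) / ∫ ω, X ω ^ n ∂μ

lemma powerWeightedCDF_of_neg (hX : ∀ ω, X ω ≤ 1) (n : ℕ) {ε : ℝ} (hε : ε < 0) :
    powerWeightedCDF μ X n ε = 0 := by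
  have : ∀ ω, ¬ 1 - X ω ≤ ε := fun ω h ↦ by linarith [hX ω]
  simp [powerWeightedCDF, this]

variable [IsFiniteMeasure μ]

lemma integrable_pow_of_mem_unitInterval (hXm : AEMeasurable X μ) (hX0 : ∀ ω, 0 ≤ X ω)
    (hX1 : ∀ ω, X ω ≤ 1) (n : ℕ) : Integrable (fun ω ↦ X ω ^ n) μ :=
  Integrable.of_bound (hXm.pow_const n).aestronglyMeasurable 1 <| ae_of_all _ fun ω ↦ by
    rw [Real.norm_eq_abs, abs_of_nonneg (pow_nonneg (hX0 ω) n)]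
    exact pow_le_one₀ (hX0 ω) (hX1 ω)

lemma powerWeightedCDF_eq_one_sub (hXm : AEMeasurable X μ) (hX0 : ∀ ω, 0 ≤ X ω)
    (hX1 : ∀ ω, X ω ≤ 1) (n : ℕ) (ε : ℝ) (hD : ∫ ω, X ω ^ n ∂μ ≠ 0) :
    powerWeightedCDF μ X n ε =
      1 - (∫ ω, (if 1 - X ω ≤ ε then 0 else X ω ^ n) ∂μ) / ∫ ω, X ω ^ n ∂μ := by
  have hg : Measurable fun x : ℝ ↦ if 1 - x ≤ ε then (0 : ℝ) else x ^ n :=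
    Measurable.ite (measurableSet_le (by fun_prop) measurable_const) measurable_const
      (measurable_id.pow_const n)
  have hint : Integrable (fun ω ↦ if 1 - X ω ≤ ε then 0 else X ω ^ n) μ :=
    (integrable_pow_of_mem_unitInterval hXm hX0 hX1 n).mono
      (hg.comp_aemeasurable hXm).aestronglyMeasurable <| ae_of_all _ fun ω ↦ by
        split_ifs <;> simp
  have hsplit : (fun ω ↦ if 1 - X ω ≤ ε then X ω ^ n else 0) =
      fun ω ↦ X ω ^ n - if 1 - X ω ≤ ε then 0 else X ω ^ n := by
    funext ω; split_ifs <;> ring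
  rw [powerWeightedCDF, hsplit, integral_sub (integrable_pow_of_mem_unitInterval hXm hX0 hX1 n)
    hint, sub_div, div_self hD]

lemma pow_mul_measureReal_le_integral_pow (hXm : AEMeasurable X μ) (hX0 : ∀ ω, 0 ≤ X ω)
    (hX1 : ∀ ω, X ω ≤ 1) (n : ℕ) {t : ℝ} (ht : 0 ≤ t) :
    t ^ n * μ.real {ω | t ≤ X ω} ≤ ∫ ω, X ω ^ n ∂μ := by
  calc t ^ n * μ.real {ω | t ≤ X ω}
      ≤ t ^ n * μ.real {ω | t ^ n ≤ X ω ^ n} := by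
        gcongr t ^ n * ?_
        exact measureReal_mono fun ω (h : t ≤ X ω) ↦ pow_le_pow_left₀ ht h n
    _ ≤ ∫ ω, X ω ^ n ∂μ := mul_meas_ge_le_integral_of_nonneg
        (ae_of_all _ fun ω ↦ pow_nonneg (hX0 ω) n)
        (integrable_pow_of_mem_unitInterval hXm hX0 hX1 n) _

lemma integral_ite_pow_le_one_sub_pow (hX0 : ∀ ω, 0 ≤ X ω) (n : ℕ) {c ε : ℝ} (hc : c ≤ 1)
    (hcε : c ≤ ε) :
    ∫ ω, (if 1 - X ω ≤ ε then 0 else X ω ^ n) ∂μ ≤ (1 - c) ^ n * μ.real Set.univ := by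
  refine (Real.le_norm_self _).trans (norm_integral_le_of_norm_le_const (ae_of_all _ fun ω ↦ ?_))
  split_ifs with h
  · simpa using pow_nonneg (sub_nonneg.2 hc) n
  · rw [Real.norm_eq_abs, abs_of_nonneg (pow_nonneg (hX0 ω) n)]
    exact pow_le_pow_left₀ (hX0 ω) (by linarith) n

theorem tendsto_powerWeightedCDF_one (hXm : AEMeasurable X μ) (hX0 : ∀ ω, 0 ≤ X ω)
    (hX1 : ∀ ω, X ω ≤ 1) (hmass : ∀ δ > 0, 0 < μ {ω | 1 - δ ≤ X ω}) {ε : ℕ → ℝ} {c : ℝ}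
    (hc : 0 < c) (hε : ∀ n, c ≤ ε n) :
    Tendsto (fun n ↦ powerWeightedCDF μ X n (ε n)) atTop (𝓝 1) := by
  wlog hc1 : c < 1 generalizing c
  · exact this (lt_min hc one_half_pos) (fun n ↦ (min_le_left _ _).trans (hε n))
      ((min_le_right _ _).trans_lt one_half_lt_one)
  set p := μ.real {ω | 1 - c / 2 ≤ X ω}
  have hp : 0 < p := ENNReal.toReal_pos (hmass _ (half_pos hc)).ne' (measure_ne_top _ _)
  have hlower (n : ℕ) : (1 - c / 2) ^ n * p ≤ ∫ ω, X ω ^ n ∂μ :=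
    pow_mul_measureReal_le_integral_pow hXm hX0 hX1 n (by linarith)
  have hD (n : ℕ) : 0 < ∫ ω, X ω ^ n ∂μ :=
    lt_of_lt_of_le (mul_pos (pow_pos (by linarith) n) hp) (hlower n)
  have hgeom : Tendsto (fun n : ℕ ↦ ((1 - c) / (1 - c / 2)) ^ n * (μ.real Set.univ / p))
      atTop (𝓝 0) := by
    simpa using (tendsto_pow_atTop_nhds_zero_of_lt_one (by bound)
      ((div_lt_one (by linarith)).2 (by linarith))).mul_const (μ.real Set.univ / p)
  have hratio : Tendsto (fun n ↦ (∫ ω, (if 1 - X ω ≤ ε n then 0 else X ω ^ n) ∂μ) /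
      ∫ ω, X ω ^ n ∂μ) atTop (𝓝 0) := by
    refine squeeze_zero (fun n ↦ div_nonneg (integral_nonneg fun ω ↦ ?_) (hD n).le)
      (fun n ↦ ?_) hgeom
    · split_ifs <;> simp [pow_nonneg (hX0 ω)]
    calc _ ≤ (1 - c) ^ n * μ.real Set.univ / ((1 - c / 2) ^ n * p) :=
          div_le_div₀ (mul_nonneg (pow_nonneg (by linarith) n) measureReal_nonneg)
            (integral_ite_pow_le_one_sub_pow hX0 n hc1.le (hε n))
            (mul_pos (pow_pos (by linarith) n) hp) (hlower n)
      _ = _ := by rw [div_pow]; field_simp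
  simpa using (hratio.const_sub 1).congr fun n ↦
    (powerWeightedCDF_eq_one_sub hXm hX0 hX1 n (ε n) (hD n).ne').symm

end PowerWeighted

lemma measure_one_sub_le_stdCDF_mul_pos {Ω : Type*} [MeasurableSpace Ω] {μ : Measure Ω} {Z : Ω → ℝ}
    (hZ : μ.map Z = gaussianReal 0 1) {a : ℝ} (ha : 0 < a) {δ : ℝ} (hδ : 0 < δ) :
    0 < μ {ω | 1 - δ ≤ stdCDF (a * Z ω)} := by
  obtain ⟨t, ht⟩ := ((stdCDF_eq_cdf_gaussianReal ▸ tendsto_cdf_atTop _).eventually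
    (eventually_ge_nhds (show 1 - δ < 1 by linarith))).exists
  have hZm : AEMeasurable Z μ := .of_map_ne_zero (hZ ▸ IsProbabilityMeasure.ne_zero _)
  calc 0 < μ.map Z (Set.Ici (t / a)) := hZ ▸ gaussianReal_Ici_pos 0 one_ne_zero _
    _ = μ (Z ⁻¹' Set.Ici (t / a)) := Measure.map_apply_of_aemeasurable hZm measurableSet_Ici
    _ ≤ μ {ω | 1 - δ ≤ stdCDF (a * Z ω)} := measure_mono fun ω (hω : t / a ≤ Z ω) ↦ by
        refine ht.trans (stdCDF_eq_cdf_gaussianReal ▸ monotone_cdf _ ?_)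
        rwa [div_le_iff₀' ha] at hω

/-- with R_n(ε) = E[1{1−Φ(aZ) ≤ ε} Φ(aZ)^n]/E[Φ(aZ)^n] and
ε* = (1−ρ)/(nρ), for every c > 0: (i) R_n(ε* − c) = 0 for all large n, and
(ii) R_n(ε* + c) → 1 as n → ∞. -/
theorem stmt_11 {Ω : Type*} [MeasurableSpace Ω] (μ : Measure Ω) [IsProbabilityMeasure μ]
    (ρ : ℝ) (hρ : ρ ∈ Set.Ioo (0:ℝ) 1) (a : ℝ) (ha : a = Real.sqrt (ρ / (1 - ρ)))
    (Z : Ω → ℝ) (hZ : Measure.map Z μ = gaussianReal 0 1)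
    (R : ℕ → ℝ → ℝ)
    (hR : ∀ n ε, R n ε =
      (∫ ω, (if 1 - stdCDF (a * Z ω) ≤ ε then (stdCDF (a * Z ω)) ^ n else 0) ∂μ) /
        ∫ ω, (stdCDF (a * Z ω)) ^ n ∂μ)
    (c : ℝ) (hc : 0 < c) :
    (∃ N : ℕ, ∀ n ≥ N, R n ((1 - ρ) / (n * ρ) - c) = 0) ∧
    Tendsto (fun n : ℕ => R n ((1 - ρ) / (n * ρ) + c)) atTop (nhds 1) := by
  obtain ⟨hρ0, hρ1⟩ := hρ
  have ha0 : 0 < a := ha ▸ Real.sqrt_pos.2 (div_pos hρ0 (sub_pos.2 hρ1))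
  have hZm : AEMeasurable Z μ := .of_map_ne_zero (hZ ▸ IsProbabilityMeasure.ne_zero _)
  set X := fun ω ↦ stdCDF (a * Z ω)
  have hRX : R = powerWeightedCDF μ X := by funext n ε; exact hR n ε
  have hX0 (ω : Ω) : 0 ≤ X ω := by simp only [X, stdCDF_eq_cdf_gaussianReal, cdf_nonneg]
  have hX1 (ω : Ω) : X ω ≤ 1 := by simp only [X, stdCDF_eq_cdf_gaussianReal, cdf_le_one]
  have hXm : AEMeasurable X μ :=
    (stdCDF_eq_cdf_gaussianReal ▸ (monotone_cdf _).measurable).comp_aemeasurable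
      (hZm.const_mul a)
  have hεstar : Tendsto (fun n : ℕ ↦ (1 - ρ) / (n * ρ)) atTop (𝓝 0) :=
    tendsto_const_nhds.div_atTop (tendsto_natCast_atTop_atTop.atTop_mul_const hρ0)
  refine ⟨?_, ?_⟩
  · obtain ⟨N, hN⟩ := eventually_atTop.1 (hεstar.eventually (gt_mem_nhds hc))
    exact ⟨N, fun n hn ↦ hRX ▸ powerWeightedCDF_of_neg hX1 n (by linarith [hN n hn])⟩
  · rw [hRX]
    exact tendsto_powerWeightedCDF_one hXm hX0 hX1 (fun δ ↦ measure_one_sub_le_stdCDF_mul_pos hZ ha0) hc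
      fun n ↦ le_add_of_nonneg_left (div_nonneg (sub_nonneg.2 hρ1.le) (by positivity))
end
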